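/- Deferred correction convergence: suppose L¹ : X → X on a finite-dimensional normed space X satisfies (i) L¹(v) − L¹(w) = D(v − w) for an invertible linear map D with ‖D^{-1}‖ ≤ C₁, (ii) ‖(L¹ − L²)(v) − (L¹ − L²)(w)‖ ≤ C Δt ‖v − w‖ for all v, w, and (iii) L²(v*) = 0 for some v*. Then the iteration v^{k+1} = v^k − D^{-1} L²(v^k) (equivalently L¹(v^{k+1}) = L¹(v^k) − L²(v^k)) satisfies ‖v^{k} − v*‖ ≤ (C₁ C Δt)^k ‖v^0 − v*‖; in particular after M iterations the error is O(Δt^M) times the initial error. -/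
import Mathlib


/-- Deferred correction convergence: if `L¹ v - L¹ w = D (v - w)` for an invertible
continuous linear map `D` with `‖D⁻¹‖ ≤ C₁`, if `L¹ - L²` is `C Δt`-Lipschitz, and
`L² v* = 0`, then the iteration `L¹(v^{k+1}) = L¹(v^k) - L²(v^k)`, i.e.
`v^{k+1} = v^k - D⁻¹ (L² (v^k))`, satisfies `‖v^k - v*‖ ≤ (C₁ C Δt)^k ‖v^0 - v*‖`. -/
theorem deferred_correction_convergence
    {X : Type*} [NormedAddCommGroup X] [NormedSpace ℝ X] [FiniteDimensional ℝ X]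
    (L1 L2 : X → X) (D : X ≃L[ℝ] X) (Δt C C1 : ℝ)
    (hΔt : 0 < Δt) (hC : 0 < C) (hC1 : 0 < C1)
    (hD : ∀ v w, L1 v - L1 w = D (v - w))
    (hDinv : ‖(D.symm : X →L[ℝ] X)‖ ≤ C1)
    (hLip : ∀ v w, ‖(L1 v - L2 v) - (L1 w - L2 w)‖ ≤ C * Δt * ‖v - w‖)
    (vstar : X) (hstar : L2 vstar = 0)
    (v : ℕ → X) (hiter : ∀ k, v (k+1) = v k - D.symm (L2 (v k))) :
    ∀ k, ‖v k - vstar‖ ≤ (C1 * C * Δt)^k * ‖v 0 - vstar‖ := by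
  intro k
  induction k with
  | zero => simp
  | succ k ih =>
    have key : v (k+1) - vstar = D.symm ((L1 (v k) - L2 (v k)) - (L1 vstar - L2 vstar)) := by
      have h2 : (L1 (v k) - L2 (v k)) - (L1 vstar - L2 vstar) = D (v k - vstar) - L2 (v k) := by
        rw [hstar, ← hD]; abel
      rw [hiter k, h2, map_sub, D.symm_apply_apply]
      abel
    have hb : ‖v (k+1) - vstar‖ ≤ C1 * (C * Δt * ‖v k - vstar‖) := by
      rw [key]
      calc ‖(D.symm : X →L[ℝ] X) ((L1 (v k) - L2 (v k)) - (L1 vstar - L2 vstar))‖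
          ≤ ‖(D.symm : X →L[ℝ] X)‖ * ‖(L1 (v k) - L2 (v k)) - (L1 vstar - L2 vstar)‖ :=
            (D.symm : X →L[ℝ] X).le_opNorm _
        _ ≤ C1 * (C * Δt * ‖v k - vstar‖) := by
            apply mul_le_mul hDinv (hLip _ _) (norm_nonneg _)
            exact le_of_lt hC1
    calc ‖v (k+1) - vstar‖ ≤ C1 * (C * Δt * ‖v k - vstar‖) := hb
      _ ≤ C1 * (C * Δt * ((C1 * C * Δt)^k * ‖v 0 - vstar‖)) := by
          apply mul_le_mul_of_nonneg_left _ (le_of_lt hC1)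
          exact mul_le_mul_of_nonneg_left ih (by positivity)
      _ = (C1 * C * Δt)^(k+1) * ‖v 0 - vstar‖ := by ring
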